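/- arXiv:math/0502520 — 3 statements merged into one kernel-verified Lean document; each statement's English description precedes it below -/
import Mathlib

section
/- The two polynomials g₁ := 884736·t⁶ − 1327104·t⁵u² + 829440·t⁴u⁴ − 8640·t³·(32u⁶ − 341) + 6480·t²·(8u⁶ − 341)·u² − 324·t·(16u⁶ − 1705)·u⁴ + (216·u¹² − 46035·u⁶ + 10974400) and g₂ := 18432·t⁴ − 18432·t³u² + 6912·t²u⁴ − 4·(288·t·u⁶ − 561260·s − 70445·t) + u²·(72·u⁶ − 70445) have no common zero (s, t, u) ∈ ℝ³. -/
/-- The two generators `g₁, g₂` of the prime ideal `𝔰𝔩_{f,3}`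
have no common zero `(s, t, u) ∈ ℝ³`. -/
theorem no_real_common_zero :
    ¬ ∃ s t u : ℝ,
      884736 * t ^ 6 - 1327104 * t ^ 5 * u ^ 2 + 829440 * t ^ 4 * u ^ 4
          - 8640 * t ^ 3 * (32 * u ^ 6 - 341)
          + 6480 * t ^ 2 * (8 * u ^ 6 - 341) * u ^ 2
          - 324 * t * (16 * u ^ 6 - 1705) * u ^ 4
          + (216 * u ^ 12 - 46035 * u ^ 6 + 10974400) = 0 ∧
      18432 * t ^ 4 - 18432 * t ^ 3 * u ^ 2 + 6912 * t ^ 2 * u ^ 4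
          - 4 * (288 * t * u ^ 6 - 561260 * s - 70445 * t)
          + u ^ 2 * (72 * u ^ 6 - 70445) = 0 := by
  rintro ⟨s, t, u, h1, h2⟩
  nlinarith [sq_nonneg (432 * (4 * t - u ^ 2) ^ 3 + 46035), h1]
end

section
/- The ideal 𝔰𝔩_{f,1} := (16s − 4t + u², 1728s³ − 5) of the polynomial ring ℚ[s,t,u] is a prime ideal. -/
/-!
Write `X 0, X 1, X 2` for `s, t, u` and let `K = ℚ(α)` with `α³ = 5`, a field because `X³ - 5`
has no rational root. The ideal is the kernel of the map `ℚ[s,t,u] → K[u]` given by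
`s ↦ α/12`, `t ↦ α/3 + u²/4`, `u ↦ u`: modulo the ideal, the first generator eliminates `t` and
the second makes `12s` a cube root of `5`, so `K[u] → ℚ[s,t,u]/I`, `α ↦ 12s`, `u ↦ u`, composed
with that map is the quotient map. Hence the quotient embeds in the domain `K[u]`.
-/

open MvPolynomial

theorem Ideal.isPrime_of_le_ker_of_leftInverse {R S : Type*} [CommRing R] [CommRing S]
    [IsDomain S] {I : Ideal R} (φ : R →+* S) (ψ : S →+* R ⧸ I) (hI : I ≤ RingHom.ker φ)
    (hψ : ∀ p, ψ (φ p) = Ideal.Quotient.mk I p) : I.IsPrime := by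
  have hker : RingHom.ker φ = I := by
    refine le_antisymm (fun p hp => ?_) hI
    rw [← Ideal.Quotient.eq_zero_iff_mem, ← hψ, RingHom.mem_ker.1 hp, map_zero]
  exact hker ▸ RingHom.ker_isPrime φ

theorem Int.pow_three_ne_five (n : ℤ) : n ^ 3 ≠ 5 := by
  intro h
  rcases le_or_gt n 1 with hn | hn
  · nlinarith [sq_nonneg n, sq_nonneg (n - 1), sq_nonneg (n + 1)]
  · nlinarith [sq_nonneg n, sq_nonneg (n - 2)]

theorem Rat.pow_three_ne_five (q : ℚ) : q ^ 3 ≠ 5 := fun h =>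
  Int.pow_three_ne_five q.num (by simpa [Rat.num_pow] using congrArg Rat.num h)

theorem irreducible_X_pow_three_sub_five :
    Irreducible (Polynomial.X ^ 3 - Polynomial.C 5 : Polynomial ℚ) :=
  X_pow_sub_C_irreducible_of_prime Nat.prime_three Rat.pow_three_ne_five

noncomputable section

namespace SlF1

abbrev K : Type := AdjoinRoot (Polynomial.X ^ 3 - Polynomial.C 5 : Polynomial ℚ)

instance : Fact (Irreducible (Polynomial.X ^ 3 - Polynomial.C 5 : Polynomial ℚ)) :=
  ⟨irreducible_X_pow_three_sub_five⟩

abbrev α : K := AdjoinRoot.root _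

theorem α_pow_three : α ^ 3 = 5 := by
  have := AdjoinRoot.eval₂_root (Polynomial.X ^ 3 - Polynomial.C 5 : Polynomial ℚ)
  simpa [sub_eq_zero] using this

def ideal : Ideal (MvPolynomial (Fin 3) ℚ) :=
  Ideal.span {16 * X 0 - 4 * X 1 + X 2 ^ 2, 1728 * X 0 ^ 3 - 5}

def param : MvPolynomial (Fin 3) ℚ →ₐ[ℚ] Polynomial K :=
  aeval ![(1 / 12 : ℚ) • Polynomial.C α,
    (1 / 3 : ℚ) • Polynomial.C α + (1 / 4 : ℚ) • Polynomial.X ^ 2, Polynomial.X]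

theorem ideal_le_ker_param : ideal ≤ RingHom.ker param := by
  have hα : Polynomial.C α ^ 3 = 5 := by rw [← Polynomial.C_pow, α_pow_three]; rfl
  rw [ideal, Ideal.span_le, Set.insert_subset_iff, Set.singleton_subset_iff]
  simp only [SetLike.mem_coe, RingHom.mem_ker, param, map_add, map_sub, map_mul, map_pow,
    map_ofNat, aeval_X, Matrix.cons_val]
  constructor
  · algebra
  · linear_combination (norm := algebra) hα

local notation "x" i:max => Ideal.Quotient.mk ideal (X i)

theorem mk_generator_left : 16 * x 0 - 4 * x 1 + x 2 ^ 2 = 0 := by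
  have : (16 * X 0 - 4 * X 1 + X 2 ^ 2 : MvPolynomial (Fin 3) ℚ) ∈ ideal :=
    Ideal.subset_span (by simp)
  simpa only [map_add, map_sub, map_mul, map_pow, map_ofNat] using
    Ideal.Quotient.eq_zero_iff_mem.2 this

theorem mk_generator_right : 1728 * x 0 ^ 3 - 5 = 0 := by
  have : (1728 * X 0 ^ 3 - 5 : MvPolynomial (Fin 3) ℚ) ∈ ideal := Ideal.subset_span (by simp)
  simpa only [map_sub, map_mul, map_pow, map_ofNat] using Ideal.Quotient.eq_zero_iff_mem.2 this

def rootLift : K →ₐ[ℚ] MvPolynomial (Fin 3) ℚ ⧸ ideal :=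
  AdjoinRoot.liftAlgHom _ (Algebra.ofId _ _) (12 * x 0) (by
    simp only [Polynomial.eval₂_sub, Polynomial.eval₂_pow, Polynomial.eval₂_X, map_ofNat,
      Polynomial.eval₂_ofNat]
    linear_combination (norm := algebra) mk_generator_right)

def unparam : Polynomial K →ₐ[ℚ] MvPolynomial (Fin 3) ℚ ⧸ ideal :=
  Polynomial.eval₂AlgHom rootLift (x 2) fun _ => Commute.all _ _

theorem rootLift_α : rootLift α = 12 * x 0 := AdjoinRoot.liftAlgHom_root ..

theorem unparam_C (a : K) : unparam (Polynomial.C a) = rootLift a := Polynomial.eval₂_C ..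

theorem unparam_X : unparam Polynomial.X = x 2 := Polynomial.eval₂_X ..

theorem unparam_param (p : MvPolynomial (Fin 3) ℚ) :
    unparam (param p) = Ideal.Quotient.mk ideal p := by
  suffices unparam.comp param = Ideal.Quotient.mkₐ ℚ ideal from DFunLike.congr_fun this p
  ext i
  fin_cases i <;>
    simp only [param, AlgHom.coe_comp, Function.comp_apply, aeval_X, Fin.zero_eta, Fin.mk_one,
      Fin.reduceFinMk, Fin.isValue, Matrix.cons_val, map_add, map_smul, map_pow, unparam_C,
      unparam_X, rootLift_α, Ideal.Quotient.mkₐ_eq_mk]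
  · algebra
  · linear_combination (norm := algebra) (1 / 4 : ℚ) • mk_generator_left

end SlF1

end

/-- The ideal `𝔰𝔩_{f,1} = (16s − 4t + u², 1728s³ − 5)` of `ℚ[s,t,u]`
is prime (variables `X 0 = s`, `X 1 = t`, `X 2 = u`). -/
theorem sl_f1_isPrime :
    (Ideal.span {(16 * X 0 - 4 * X 1 + X 2 ^ 2 : MvPolynomial (Fin 3) ℚ),
        (1728 * X 0 ^ 3 - 5 : MvPolynomial (Fin 3) ℚ)}).IsPrime :=
  Ideal.isPrime_of_le_ker_of_leftInverse SlF1.param.toRingHom SlF1.unparam.toRingHom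
    SlF1.ideal_le_ker_param SlF1.unparam_param
end

section
/- The ideal 𝔰𝔩_{f,2} := (5u² − 48s − 20t, 144s² + 60s + 25) of the polynomial ring ℚ[s,t,u] is a prime ideal, and the ideal 𝔰𝔩_{f,4} := (12s − 5, u² − 4t − 4) of ℚ[s,t,u] is a prime ideal. -/
/-!
Write `s, t, u` for `X 0, X 1, X 2`. In both ideals one generator is a nonzero scalar multiple
of `t - q(s, u)` and the other is `p(s)` for an irreducible `p ∈ ℚ[s]` (`12s - 5`, resp.
`144s² + 60s + 25`, of discriminant `-10800`). Substituting `t ↦ q(s, u)` and `s ↦ θ` for a root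
`θ` of `p` maps `ℚ[s, t, u]` onto the domain `ℚ(θ)[u]`, and the substitution `θ ↦ s`, `u ↦ u`
back into the quotient shows that the kernel of this map is exactly the ideal.
-/

open MvPolynomial

theorem Ideal.isPrime_of_comp_eq_mk {R S : Type*} [CommRing R] [CommRing S] [IsDomain S]
    {I : Ideal R} (φ : R →+* S) (ψ : S →+* R ⧸ I) (hφ : I ≤ RingHom.ker φ)
    (hψ : ψ.comp φ = Ideal.Quotient.mk I) : I.IsPrime := by
  have hker : I = RingHom.ker φ := by
    refine le_antisymm hφ fun a ha => ?_
    rw [← Ideal.Quotient.eq_zero_iff_mem, ← hψ, RingHom.comp_apply, RingHom.mem_ker.mp ha,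
      map_zero]
  exact hker ▸ RingHom.ker_isPrime φ

theorem Ideal.span_insert_mul_left_unit {α : Type*} [CommSemiring α] {a : α} (ha : IsUnit a)
    (x : α) (s : Set α) : Ideal.span (insert (a * x) s) = Ideal.span (insert x s) := by
  rw [Ideal.span_insert, Ideal.span_insert, Ideal.span_singleton_mul_left_unit ha]

theorem Polynomial.irreducible_quadratic_of_discrim_ne_sq {K : Type*} [Field K] {a b c : K}
    (ha : a ≠ 0) (h : ∀ s : K, discrim a b c ≠ s ^ 2) :
    Irreducible (C a * X ^ 2 + C b * X + C c) := by
  refine irreducible_of_degree_le_three_of_not_isRoot (by simp [natDegree_quadratic ha])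
    fun x hx => quadratic_ne_zero_of_discrim_ne_sq h x ?_
  simpa [sq] using hx

section RootSubst

variable {k : Type*} [Field k] (p : Polynomial k) (q : MvPolynomial (Fin 2) k)

noncomputable def rootSubst : MvPolynomial (Fin 3) k →ₐ[k] Polynomial (AdjoinRoot p) :=
  aeval ![Polynomial.C (AdjoinRoot.root p),
    aeval ![Polynomial.C (AdjoinRoot.root p), Polynomial.X] q, Polynomial.X]

theorem rootSubst_X_zero : rootSubst p q (X 0) = Polynomial.C (AdjoinRoot.root p) := by
  simp [rootSubst]

theorem rootSubst_X_two : rootSubst p q (X 2) = Polynomial.X := by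
  simp [rootSubst]

theorem rootSubst_aeval : rootSubst p q (aeval ![X 0, X 2] q) = rootSubst p q (X 1) := by
  rw [comp_aeval_apply, rootSubst, aeval_X]
  refine congrArg (aeval · q) (funext fun i => ?_)
  fin_cases i <;> simp

theorem span_le_ker_rootSubst :
    Ideal.span {Polynomial.aeval (X 0 : MvPolynomial (Fin 3) k) p, X 1 - aeval ![X 0, X 2] q} ≤
      RingHom.ker (rootSubst p q) := by
  rw [Ideal.span_le, Set.insert_subset_iff, Set.singleton_subset_iff]
  constructor
  · change rootSubst p q _ = 0
    rw [← Polynomial.aeval_algHom_apply, rootSubst_X_zero, ← Polynomial.CAlgHom_apply (R := k),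
      Polynomial.aeval_algHom_apply, AdjoinRoot.aeval_eq, AdjoinRoot.mk_self, map_zero]
  · change rootSubst p q _ = 0
    rw [map_sub, rootSubst_aeval, sub_self]

theorem isPrime_span_aeval_X_zero_X_one_sub_aeval (hp : Irreducible p) :
    (Ideal.span {Polynomial.aeval (X 0 : MvPolynomial (Fin 3) k) p,
      X 1 - aeval ![X 0, X 2] q}).IsPrime := by
  have := Fact.mk hp
  set I := Ideal.span {Polynomial.aeval (X 0 : MvPolynomial (Fin 3) k) p,
      X 1 - aeval ![X 0, X 2] q}
  have hroot : Polynomial.eval₂ (algebraMap k (MvPolynomial (Fin 3) k ⧸ I))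
      (Ideal.Quotient.mk I (X 0)) p = 0 := by
    rw [← Polynomial.aeval_def, ← Ideal.Quotient.mkₐ_eq_mk k, Polynomial.aeval_algHom_apply,
      Ideal.Quotient.mkₐ_eq_mk, Ideal.Quotient.eq_zero_iff_mem]
    exact Ideal.subset_span (by simp)
  let ψ : Polynomial (AdjoinRoot p) →ₐ[k] MvPolynomial (Fin 3) k ⧸ I :=
    Polynomial.eval₂AlgHom (AdjoinRoot.liftAlgHom p (Algebra.ofId k _) _ hroot)
      (Ideal.Quotient.mk I (X 2)) fun _ => Commute.all _ _
  have hψC : ψ (Polynomial.C (AdjoinRoot.root p)) = Ideal.Quotient.mk I (X 0) := by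
    rw [Polynomial.eval₂AlgHom_apply, Polynomial.eval₂_C]
    exact AdjoinRoot.liftAlgHom_root p _ _ hroot
  have hψX : ψ Polynomial.X = Ideal.Quotient.mk I (X 2) := by simp [ψ]
  have hψφ1 : ψ (rootSubst p q (X 1)) = Ideal.Quotient.mk I (X 1) := calc
    ψ (rootSubst p q (X 1)) = ψ (rootSubst p q (aeval ![X 0, X 2] q)) := by rw [rootSubst_aeval]
    _ = Ideal.Quotient.mkₐ k I (aeval ![X 0, X 2] q) := by
      rw [comp_aeval_apply, comp_aeval_apply, comp_aeval_apply]
      refine congrArg (aeval · q) (funext fun i => ?_)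
      fin_cases i <;> simp [rootSubst_X_zero, rootSubst_X_two, hψC, hψX]
    _ = Ideal.Quotient.mk I (X 1) := (Ideal.Quotient.eq.mpr (Ideal.subset_span (by simp))).symm
  have hψφ : ψ.comp (rootSubst p q) = Ideal.Quotient.mkₐ k I := by
    refine MvPolynomial.algHom_ext fun i => ?_
    fin_cases i
    · simp [rootSubst_X_zero, hψC]
    · exact hψφ1
    · simp [rootSubst_X_two, hψX]
  exact Ideal.isPrime_of_comp_eq_mk _ ψ.toRingHom (span_le_ker_rootSubst p q)
    (congrArg AlgHom.toRingHom hψφ)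

end RootSubst

/-- The ideals `𝔰𝔩_{f,2} = (5u² − 48s − 20t, 144s² + 60s + 25)` and
`𝔰𝔩_{f,4} = (12s − 5, u² − 4t − 4)` of `ℚ[s,t,u]` are prime
(variables `X 0 = s`, `X 1 = t`, `X 2 = u`). -/
theorem sl_f2_and_sl_f4_isPrime :
    (Ideal.span {(5 * X 2 ^ 2 - 48 * X 0 - 20 * X 1 : MvPolynomial (Fin 3) ℚ),
        (144 * X 0 ^ 2 + 60 * X 0 + 25 : MvPolynomial (Fin 3) ℚ)}).IsPrime ∧
    (Ideal.span {(12 * X 0 - 5 : MvPolynomial (Fin 3) ℚ),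
        (X 2 ^ 2 - 4 * X 1 - 4 : MvPolynomial (Fin 3) ℚ)}).IsPrime := by
  have hunit (r : ℚ) (hr : r ≠ 0) : IsUnit (C r : MvPolynomial (Fin 3) ℚ) :=
    (isUnit_iff_ne_zero.mpr hr).map C
  have hp₂ : (144 * X 0 ^ 2 + 60 * X 0 + 25 : MvPolynomial (Fin 3) ℚ) =
      Polynomial.aeval (X 0) (.C 144 * .X ^ 2 + .C 60 * .X + .C 25 : Polynomial ℚ) := by
    simp [map_ofNat]
  have hq₂ : (5 * X 2 ^ 2 - 48 * X 0 - 20 * X 1 : MvPolynomial (Fin 3) ℚ) =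
      C (-20) * (X 1 - aeval ![X 0, X 2]
        (C (1 / 4) * X 1 ^ 2 - C (12 / 5) * X 0 : MvPolynomial (Fin 2) ℚ)) :=
    MvPolynomial.funext fun x => by simp; ring
  have hp₄ : (12 * X 0 - 5 : MvPolynomial (Fin 3) ℚ) =
      Polynomial.aeval (X 0) (.C 12 * .X - .C 5 : Polynomial ℚ) := by
    simp [map_ofNat]
  have hq₄ : (X 2 ^ 2 - 4 * X 1 - 4 : MvPolynomial (Fin 3) ℚ) =
      C (-4) * (X 1 - aeval ![X 0, X 2] (C (1 / 4) * X 1 ^ 2 - 1 : MvPolynomial (Fin 2) ℚ)) :=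
    MvPolynomial.funext fun x => by simp; ring
  constructor
  · rw [hq₂, hp₂, Ideal.span_insert_mul_left_unit (hunit _ (by norm_num)), Ideal.span_pair_comm]
    refine isPrime_span_aeval_X_zero_X_one_sub_aeval _ _ ?_
    exact Polynomial.irreducible_quadratic_of_discrim_ne_sq (by norm_num)
      fun s => by rw [discrim]; nlinarith [sq_nonneg s]
  · rw [hq₄, hp₄, Ideal.span_pair_comm, Ideal.span_insert_mul_left_unit (hunit _ (by norm_num)),
      Ideal.span_pair_comm]
    exact isPrime_span_aeval_X_zero_X_one_sub_aeval _ _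
      (Polynomial.irreducible_of_degree_eq_one (by compute_degree!))
end
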